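/- arXiv:1907.03845 — 3 statements merged into one kernel-verified Lean document; each statement's English description precedes it below -/
import Mathlib

section
/- If {d_n}_{n \geq 0} is a higher derivation on an algebra A over a field of characteristic zero with d_0 = I, then there exists a sequence {\delta_n}_{n \geq 1} of derivations on A such that (n+1) d_{n+1} = \sum_{k=0}^{n} \delta_{k+1} \circ d_{n-k} for every non-negative integer n. -/
/-!
With `D = ∑ dₙ tⁿ` and `Δ = ∑ δₙ₊₁ tⁿ` the recursion reads `D' = Δ ∘ D`; as `d₀ = I` it determines
the `δₙ₊₁` one after the other, without any division. Multiplying the Leibniz rule for `dₙ₊₁` by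
`n + 1 = i + j` and expanding `(i + 1) dᵢ₊₁` and `(j + 1) dⱼ₊₁` by the recursion shows that the
Leibniz defects of `δₖ₊₁` at `(dₗ a, dⱼ b)` sum to zero over `k + l + j = n`. By strong induction
the terms with `k < n` vanish, which leaves the defect of `δₙ₊₁` at `(a, b)`.
-/

open Finset

lemma sum_antidiagonal_antidiagonal_assoc {M : Type*} [AddCommMonoid M]
    (f : ℕ → ℕ → ℕ → M) (n : ℕ) :
    ∑ p ∈ antidiagonal n, ∑ q ∈ antidiagonal p.1, f q.1 q.2 p.2 =
      ∑ p ∈ antidiagonal n, ∑ q ∈ antidiagonal p.2, f p.1 q.1 q.2 := by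
  simp only [sum_sigma']
  apply sum_nbij' (fun ⟨⟨_, j⟩, ⟨k, l⟩⟩ ↦ ⟨(k, l + j), (l, j)⟩)
    (fun ⟨⟨k, _⟩, ⟨l, j⟩⟩ ↦ ⟨(k + l, j), (k, l)⟩) <;> aesop (add simp [add_assoc])

lemma sum_antidiagonal_antidiagonal_left_comm {M : Type*} [AddCommMonoid M]
    (f : ℕ → ℕ → ℕ → M) (n : ℕ) :
    ∑ p ∈ antidiagonal n, ∑ q ∈ antidiagonal p.2, f p.1 q.1 q.2 =
      ∑ p ∈ antidiagonal n, ∑ q ∈ antidiagonal p.2, f q.1 p.1 q.2 := by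
  rw [← sum_antidiagonal_antidiagonal_assoc f,
    ← sum_antidiagonal_antidiagonal_assoc fun k l j ↦ f l k j]
  exact sum_congr rfl fun p _ ↦ (Nat.sum_antidiagonal_swap (f := fun q ↦ f q.1 q.2 p.2)).symm

section

variable {K A : Type*} [CommSemiring K] [Ring A] [Algebra K A] {d δ : ℕ → Module.End K A}

def leibnizDefect (f : Module.End K A) (a b : A) : A := f (a * b) - f a * b - a * f b

lemma leibnizDefect_eq_zero_iff {f : Module.End K A} {a b : A} :
    leibnizDefect f a b = 0 ↔ f (a * b) = f a * b + a * f b := by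
  rw [leibnizDefect, sub_sub, sub_eq_zero]

lemma smul_apply_mul_eq_sum_antidiagonal
    (hd : ∀ n a b, d n (a * b) = ∑ p ∈ antidiagonal n, d p.1 a * d p.2 b) (n : ℕ) (a b : A) :
    ((n : K) + 1) • d (n + 1) (a * b) =
      ∑ p ∈ antidiagonal n, ((((p.1 : K) + 1) • d (p.1 + 1) a) * d p.2 b +
        d p.1 a * (((p.2 : K) + 1) • d (p.2 + 1) b)) := by
  have weight : ((n : K) + 1) • d (n + 1) (a * b) = ∑ p ∈ antidiagonal (n + 1),
      ((p.1 : K) • (d p.1 a * d p.2 b) + (p.2 : K) • (d p.1 a * d p.2 b)) := by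
    rw [hd, smul_sum]
    refine sum_congr rfl fun p hp ↦ ?_
    rw [← add_smul, ← Nat.cast_add, HasAntidiagonal.mem_antidiagonal.mp hp, Nat.cast_succ]
  rw [weight, sum_add_distrib, Nat.sum_antidiagonal_succ, Nat.sum_antidiagonal_succ']
  simp [Nat.cast_succ, sum_add_distrib]

lemma sum_leibnizDefect_eq_zero
    (hd : ∀ n a b, d n (a * b) = ∑ p ∈ antidiagonal n, d p.1 a * d p.2 b)
    (hδ : ∀ n, ∑ p ∈ antidiagonal n, δ (p.1 + 1) * d p.2 = ((n : K) + 1) • d (n + 1))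
    (n : ℕ) (a b : A) :
    ∑ p ∈ antidiagonal n, ∑ q ∈ antidiagonal p.2, leibnizDefect (δ (p.1 + 1)) (d q.1 a) (d q.2 b) =
      0 := by
  have hδ_apply (m : ℕ) (x : A) :
      ∑ p ∈ antidiagonal m, δ (p.1 + 1) (d p.2 x) = ((m : K) + 1) • d (m + 1) x := by
    simpa using LinearMap.congr_fun (hδ m) x
  have h₁ : ∑ p ∈ antidiagonal n, ∑ q ∈ antidiagonal p.2, δ (p.1 + 1) (d q.1 a * d q.2 b) =
      ((n : K) + 1) • d (n + 1) (a * b) := by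
    rw [← hδ_apply]
    simp only [hd, map_sum]
  have h₂ : ∑ p ∈ antidiagonal n, ∑ q ∈ antidiagonal p.2, δ (p.1 + 1) (d q.1 a) * d q.2 b =
      ∑ p ∈ antidiagonal n, (((p.1 : K) + 1) • d (p.1 + 1) a) * d p.2 b := by
    rw [← sum_antidiagonal_antidiagonal_assoc (fun k l j ↦ δ (k + 1) (d l a) * d j b)]
    simp only [← sum_mul, hδ_apply]
  have h₃ : ∑ p ∈ antidiagonal n, ∑ q ∈ antidiagonal p.2, d q.1 a * δ (p.1 + 1) (d q.2 b) =
      ∑ p ∈ antidiagonal n, d p.1 a * (((p.2 : K) + 1) • d (p.2 + 1) b) := by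
    rw [sum_antidiagonal_antidiagonal_left_comm (fun k l j ↦ d l a * δ (k + 1) (d j b))]
    simp only [← mul_sum, hδ_apply]
  simp only [leibnizDefect, sum_sub_distrib]
  rw [h₁, h₂, h₃, smul_apply_mul_eq_sum_antidiagonal hd, sum_add_distrib]
  abel

lemma apply_mul_of_sum_antidiagonal_eq_smul (hd0 : d 0 = 1)
    (hd : ∀ n a b, d n (a * b) = ∑ p ∈ antidiagonal n, d p.1 a * d p.2 b)
    (hδ : ∀ n, ∑ p ∈ antidiagonal n, δ (p.1 + 1) * d p.2 = ((n : K) + 1) • d (n + 1))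
    (n : ℕ) (a b : A) :
    δ (n + 1) (a * b) = δ (n + 1) a * b + a * δ (n + 1) b := by
  induction n using Nat.strong_induction_on generalizing a b with
  | _ n ih =>
  have hsum := sum_leibnizDefect_eq_zero hd hδ n a b
  rw [sum_eq_single_of_mem (n, 0) (by simp) fun p hp hne ↦ ?lower] at hsum
  · simpa [hd0, leibnizDefect_eq_zero_iff] using hsum
  have hlt : p.1 < n := by
    rw [HasAntidiagonal.mem_antidiagonal] at hp
    by_contra!
    exact hne (Prod.ext (by omega) (by omega))
  exact sum_eq_zero fun q _ ↦ leibnizDefect_eq_zero_iff.mpr (ih p.1 hlt _ _)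

variable (d) in
noncomputable def derivationSeq : ℕ → Module.End K A
  | 0 => 0
  | n + 1 => ((n : K) + 1) • d (n + 1) -
      ∑ k ∈ (range n).attach, derivationSeq (k.1 + 1) * d (n - k.1)
  decreasing_by have := mem_range.mp k.2; omega

lemma sum_range_derivationSeq_mul (hd0 : d 0 = 1) (n : ℕ) :
    ∑ k ∈ range (n + 1), derivationSeq d (k + 1) * d (n - k) = ((n : K) + 1) • d (n + 1) := by
  rw [sum_range_succ, derivationSeq,
    sum_attach (range n) fun k ↦ derivationSeq d (k + 1) * d (n - k), Nat.sub_self, hd0, mul_one, add_sub_cancel]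

end

theorem higher_derivation_recursion_general
    {K A : Type*} [Field K] [Ring A] [Algebra K A]
    (d : ℕ → Module.End K A)
    (hd0 : d 0 = 1)
    (hhd : ∀ (n : ℕ) (a b : A),
      d n (a * b) = ∑ k ∈ Finset.range (n + 1), d (n - k) a * d k b) :
    ∃ δ : ℕ → Module.End K A,
      (∀ n, 1 ≤ n → ∀ a b : A, δ n (a * b) = δ n a * b + a * δ n b) ∧
      (∀ n : ℕ,
        ((n : K) + 1) • d (n + 1) = ∑ k ∈ Finset.range (n + 1), δ (k + 1) * d (n - k)) := by
  have hd (n : ℕ) (a b : A) : d n (a * b) = ∑ p ∈ antidiagonal n, d p.1 a * d p.2 b := by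
    rw [hhd, ← Nat.sum_antidiagonal_swap, Nat.sum_antidiagonal_eq_sum_range_succ_mk]
    rfl
  have hδ (n : ℕ) : ∑ p ∈ antidiagonal n, derivationSeq d (p.1 + 1) * d p.2 =
      ((n : K) + 1) • d (n + 1) := by
    rw [Nat.sum_antidiagonal_eq_sum_range_succ_mk, sum_range_derivationSeq_mul hd0]
  refine ⟨derivationSeq d, fun n hn a b ↦ ?_, fun n ↦ (sum_range_derivationSeq_mul hd0 n).symm⟩
  obtain ⟨m, rfl⟩ := Nat.exists_eq_add_of_le' hn
  exact apply_mul_of_sum_antidiagonal_eq_smul hd0 hd hδ m a b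

/-- Corollary 2.9 (first half): every higher derivation with `d₀ = I` arises from a
sequence of derivations via the recursion `(n+1) dₙ₊₁ = ∑ₖ δₖ₊₁ ∘ dₙ₋ₖ`. -/
theorem higher_derivation_recursion
    {K A : Type*} [Field K] [CharZero K] [Ring A] [Algebra K A]
    (d : ℕ → Module.End K A)
    (hd0 : d 0 = 1)
    (hhd : ∀ (n : ℕ) (a b : A),
      d n (a * b) = ∑ k ∈ Finset.range (n + 1), d (n - k) a * d k b) :
    ∃ δ : ℕ → Module.End K A,
      (∀ n, 1 ≤ n → ∀ a b : A, δ n (a * b) = δ n a * b + a * δ n b) ∧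
      (∀ n : ℕ,
        ((n : K) + 1) • d (n + 1) = ∑ k ∈ Finset.range (n + 1), δ (k + 1) * d (n - k)) :=
  higher_derivation_recursion_general d hd0 hhd
end

section
/- Given any sequence {\delta_n}_{n \geq 1} of derivations on an algebra A over a field of characteristic zero, the sequence defined by d_0 = I and d_n = \sum_{i=1}^{n} \sum_{r_1 + \cdots + r_i = n, r_j \geq 1} \left( \prod_{j=1}^{i} \frac{1}{r_j + \cdots + r_i} \right) \delta_{r_1} \circ \cdots \circ \delta_{r_i} is a higher derivation on A. -/
open Finset in
/-- The map `∑_{i=1}^{n} ∑_{r₁+⋯+rᵢ=n, rⱼ≥1} (∏ⱼ 1/(rⱼ+⋯+rᵢ)) δ_{r₁} ∘ ⋯ ∘ δ_{rᵢ}`. -/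
noncomputable def explicitHigherTerm {K V : Type*} [Field K] [AddCommGroup V] [Module K V]
    (F : ℕ → Module.End K V) (n : ℕ) : Module.End K V :=
  ∑ i ∈ Finset.Icc 1 n,
    ∑ r ∈ (Finset.Nat.antidiagonalTuple i n).filter (fun r => ∀ j, 0 < r j),
      (∏ j, (((∑ j' ∈ Finset.Ici j, r j') : ℕ) : K)⁻¹) •
        (List.ofFn (fun j => F (r j))).prod

/-!
Peeling off the first part `r₁ = m` of a composition of `n`, the weight `∏ⱼ 1/(rⱼ + ⋯ + rᵢ)`
contributes exactly the factor `1/n` and leaves the weight of the remaining composition of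
`n - m`. Hence, with `d₀ = I`, the `dₙ` satisfy `n dₙ = ∑_{m=1}^{n} δ_m ∘ d_{n-m}`. Any sequence
satisfying this recursion with derivations `δ_m` is a higher derivation: by strong induction, both
`n dₙ(ab)` and `∑_{i+j=n} (i + j) dᵢ(a) dⱼ(b)` expand to the sum over `m + i + j = n`, `m ≥ 1`, of
`δ_m(dᵢ a) dⱼ b + dᵢ a δ_m(dⱼ b)`.
-/

open Finset

def posAntidiagonalTuple (i n : ℕ) : Finset (Fin i → ℕ) :=
  (Nat.antidiagonalTuple i n).filter fun r => ∀ j, 0 < r j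

theorem posAntidiagonalTuple_eq_empty_of_lt {i n : ℕ} (h : n < i) :
    posAntidiagonalTuple i n = ∅ := by
  refine filter_eq_empty_iff.2 fun r hr hpos => ?_
  have : i ≤ ∑ j, r j := by
    simpa using sum_le_sum fun j (_ : j ∈ univ) => Nat.one_le_iff_ne_zero.2 (hpos j).ne'
  rw [Nat.mem_antidiagonalTuple.1 hr] at this
  omega

theorem sum_posAntidiagonalTuple_succ {M : Type*} [AddCommMonoid M] (i n : ℕ)
    (f : (Fin (i + 1) → ℕ) → M) :
    ∑ r ∈ posAntidiagonalTuple (i + 1) n, f r =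
      ∑ m ∈ Icc 1 n, ∑ s ∈ posAntidiagonalTuple i (n - m), f (Fin.cons m s) := by
  rw [sum_sigma']
  refine sum_nbij' (fun r => ⟨r 0, Fin.tail r⟩) (fun p => Fin.cons p.1 p.2) ?_ ?_
    (fun r _ => Fin.cons_self_tail r) (fun p _ => by simp) (fun r _ => by simp)
  · intro r hr
    simp only [posAntidiagonalTuple, mem_filter, Nat.mem_antidiagonalTuple, Fin.sum_univ_succ,
      mem_sigma, mem_Icc] at hr ⊢
    exact ⟨⟨hr.2 0, by omega⟩, by simp only [Fin.tail]; omega, fun j => hr.2 j.succ⟩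
  · rintro ⟨m, s⟩ hp
    simp only [posAntidiagonalTuple, mem_filter, Nat.mem_antidiagonalTuple, Fin.sum_univ_succ,
      mem_sigma, mem_Icc] at hp ⊢
    refine ⟨by simp only [Fin.cons_zero, Fin.cons_succ]; omega, Fin.cases ?_ fun j => ?_⟩
    · exact hp.1.1
    · simpa using hp.2.2 j

section Weight

variable (K : Type*) [Semifield K]

noncomputable def compositionWeight {i : ℕ} (r : Fin i → ℕ) : K :=
  ∏ j, ((∑ j' ∈ Ici j, r j' : ℕ) : K)⁻¹

theorem compositionWeight_cons {i : ℕ} (m : ℕ) (s : Fin i → ℕ) :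
    compositionWeight K (Fin.cons m s : Fin (i + 1) → ℕ) =
      ((m + ∑ j, s j : ℕ) : K)⁻¹ * compositionWeight K s := by
  have hsucc (j : Fin i) : ∑ j' ∈ Ici j.succ, (Fin.cons m s : Fin (i + 1) → ℕ) j' =
      ∑ j' ∈ Ici j, s j' := by
    rw [← Fin.map_succEmb_Ici, sum_map]
    rfl
  have hzero : Ici (0 : Fin (i + 1)) = univ := by ext; simp
  simp only [compositionWeight, Fin.prod_univ_succ, hsucc, hzero, Fin.sum_univ_succ,
    Fin.cons_zero, Fin.cons_succ]

end Weight

section CompositionTerm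

variable {K V : Type*} [Semifield K] [AddCommMonoid V] [Module K V]

noncomputable def compositionTerm (F : ℕ → Module.End K V) (i n : ℕ) : Module.End K V :=
  ∑ r ∈ posAntidiagonalTuple i n, compositionWeight K r • (List.ofFn fun j => F (r j)).prod

theorem compositionTerm_zero_left (F : ℕ → Module.End K V) (n : ℕ) :
    compositionTerm F 0 n = if n = 0 then 1 else 0 := by
  cases n <;> simp [compositionTerm, posAntidiagonalTuple, Nat.antidiagonalTuple_zero_zero,
    Nat.antidiagonalTuple_zero_succ, compositionWeight]

theorem compositionTerm_of_lt (F : ℕ → Module.End K V) {i n : ℕ} (h : n < i) :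
    compositionTerm F i n = 0 := by
  simp [compositionTerm, posAntidiagonalTuple_eq_empty_of_lt h]

theorem compositionTerm_succ (F : ℕ → Module.End K V) (i n : ℕ) :
    compositionTerm F (i + 1) n =
      (n : K)⁻¹ • ∑ m ∈ Icc 1 n, F m * compositionTerm F i (n - m) := by
  rw [compositionTerm, sum_posAntidiagonalTuple_succ, smul_sum]
  refine sum_congr rfl fun m hm => ?_
  rw [compositionTerm, mul_sum, smul_sum]
  refine sum_congr rfl fun s hs => ?_
  have hsum : m + ∑ j, s j = n := by
    rw [Nat.mem_antidiagonalTuple.1 (mem_filter.1 hs).1]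
    have := (mem_Icc.1 hm).2
    omega
  rw [compositionWeight_cons, hsum, List.ofFn_succ, List.prod_cons, mul_smul_comm, smul_smul]
  simp only [Fin.cons_zero, Fin.cons_succ]

noncomputable def explicitHigherSeq (F : ℕ → Module.End K V) (n : ℕ) : Module.End K V :=
  ∑ i ∈ range (n + 1), compositionTerm F i n

theorem sum_range_compositionTerm (F : ℕ → Module.End K V) {n N : ℕ} (h : n < N) :
    ∑ i ∈ range N, compositionTerm F i n = explicitHigherSeq F n :=
  (sum_subset (range_subset_range.2 h) fun i _ hni =>
    compositionTerm_of_lt F (by simpa using hni)).symm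

theorem explicitHigherSeq_zero (F : ℕ → Module.End K V) : explicitHigherSeq F 0 = 1 := by
  simp [explicitHigherSeq, compositionTerm_zero_left]

theorem natCast_smul_explicitHigherSeq [CharZero K] (F : ℕ → Module.End K V) (n : ℕ) :
    (n : K) • explicitHigherSeq F n = ∑ m ∈ Icc 1 n, F m * explicitHigherSeq F (n - m) := by
  rcases Nat.eq_zero_or_pos n with rfl | hn
  · simp
  have hn' : (n : K) ≠ 0 := Nat.cast_ne_zero.2 hn.ne'
  calc (n : K) • explicitHigherSeq F n
      = ∑ i ∈ range n, ∑ m ∈ Icc 1 n, F m * compositionTerm F i (n - m) := by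
        simp only [explicitHigherSeq, sum_range_succ', compositionTerm_zero_left, hn.ne',
          if_false, add_zero, compositionTerm_succ, smul_sum, smul_smul, mul_inv_cancel₀ hn',
          one_smul]
    _ = ∑ m ∈ Icc 1 n, F m * explicitHigherSeq F (n - m) := by
        rw [sum_comm]
        refine sum_congr rfl fun m hm => ?_
        rw [← mul_sum, sum_range_compositionTerm]
        have := (mem_Icc.1 hm).1
        omega

end CompositionTerm

theorem explicitHigherSeq_of_ne_zero {K V : Type*} [Field K] [AddCommGroup V] [Module K V]
    (F : ℕ → Module.End K V) {n : ℕ} (hn : n ≠ 0) :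
    explicitHigherSeq F n = explicitHigherTerm F n := by
  change _ = ∑ i ∈ Icc 1 n, compositionTerm F i n
  refine (sum_subset (fun i hi => ?_) fun i hi hni => ?_).symm
  · simp only [mem_Icc, mem_range] at hi ⊢
    omega
  · obtain rfl : i = 0 := by simp only [mem_Icc, mem_range] at hi hni; omega
    simp [compositionTerm_zero_left, hn]

theorem sum_Icc_sum_antidiagonal_sub_eq_fst {M : Type*} [AddCommMonoid M] (f : ℕ → ℕ → ℕ → M)
    (n : ℕ) :
    ∑ m ∈ Icc 1 n, ∑ p ∈ antidiagonal (n - m), f m p.1 p.2 =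
      ∑ p ∈ antidiagonal n, ∑ m ∈ Icc 1 p.1, f m (p.1 - m) p.2 := by
  rw [sum_sigma', sum_sigma']
  refine sum_nbij' (fun x => ⟨(x.1 + x.2.1, x.2.2), x.1⟩) (fun y => ⟨y.2, (y.1.1 - y.2, y.1.2)⟩)
    ?_ ?_ ?_ ?_ fun x _ => by simp
  all_goals
    intro x h
    simp only [mem_sigma, mem_Icc, HasAntidiagonal.mem_antidiagonal] at h
    simp only [mem_sigma, mem_Icc, HasAntidiagonal.mem_antidiagonal, Sigma.ext_iff,
      Prod.ext_iff, heq_eq_eq]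
    grind

theorem sum_Icc_sum_antidiagonal_sub_eq_snd {M : Type*} [AddCommMonoid M] (f : ℕ → ℕ → ℕ → M)
    (n : ℕ) :
    ∑ m ∈ Icc 1 n, ∑ p ∈ antidiagonal (n - m), f m p.1 p.2 =
      ∑ p ∈ antidiagonal n, ∑ m ∈ Icc 1 p.2, f m p.1 (p.2 - m) := by
  rw [← Nat.sum_antidiagonal_swap]
  simp only [Prod.fst_swap, Prod.snd_swap]
  rw [← sum_Icc_sum_antidiagonal_sub_eq_fst fun m i j => f m j i]
  refine sum_congr rfl fun m _ => ?_
  rw [← Nat.sum_antidiagonal_swap]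
  rfl

theorem map_mul_eq_sum_antidiagonal_of_natCast_smul_eq_sum {K A : Type*} [Semifield K]
    [CharZero K] [NonUnitalNonAssocSemiring A] [Module K A] (δ d : ℕ → Module.End K A)
    (hδ : ∀ n, 1 ≤ n → ∀ a b : A, δ n (a * b) = δ n a * b + a * δ n b)
    (hd0 : d 0 = 1) (hd : ∀ n : ℕ, (n : K) • d n = ∑ m ∈ Icc 1 n, δ m * d (n - m))
    (n : ℕ) (a b : A) :
    d n (a * b) = ∑ p ∈ antidiagonal n, d p.1 a * d p.2 b := by
  have hd_apply (k : ℕ) (x : A) : k • d k x = ∑ m ∈ Icc 1 k, δ m (d (k - m) x) := by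
    simpa [Nat.cast_smul_eq_nsmul] using LinearMap.congr_fun (hd k) x
  induction n using Nat.strong_induction_on with
  | _ n ih =>
  rcases Nat.eq_zero_or_pos n with rfl | hn
  · simp [hd0]
  refine smul_right_injective A (Nat.cast_ne_zero.2 hn.ne' : (n : K) ≠ 0) ?_
  simp only [Nat.cast_smul_eq_nsmul]
  calc n • d n (a * b)
      = ∑ m ∈ Icc 1 n, ∑ p ∈ antidiagonal (n - m),
          (δ m (d p.1 a) * d p.2 b + d p.1 a * δ m (d p.2 b)) := by
        rw [hd_apply]
        refine sum_congr rfl fun m hm => ?_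
        obtain ⟨hm_pos, hm_le⟩ := mem_Icc.1 hm
        rw [ih (n - m) (by omega), map_sum]
        exact sum_congr rfl fun p _ => hδ m hm_pos _ _
    _ = ∑ p ∈ antidiagonal n, ((∑ m ∈ Icc 1 p.1, δ m (d (p.1 - m) a)) * d p.2 b +
          d p.1 a * ∑ m ∈ Icc 1 p.2, δ m (d (p.2 - m) b)) := by
        simp only [sum_add_distrib, sum_Icc_sum_antidiagonal_sub_eq_fst
          (fun m i j => δ m (d i a) * d j b), sum_Icc_sum_antidiagonal_sub_eq_snd
          (fun m i j => d i a * δ m (d j b)), sum_mul, mul_sum]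
    _ = n • ∑ p ∈ antidiagonal n, d p.1 a * d p.2 b := by
        rw [smul_sum]
        refine sum_congr rfl fun p hp => ?_
        rw [← hd_apply, ← hd_apply, ← HasAntidiagonal.mem_antidiagonal.1 hp, add_nsmul,
          smul_mul_assoc, mul_smul_comm]

/-- Corollary 2.9 (second half): given a sequence `{δₙ}` of derivations, the sequence
defined by `d₀ = I` and the explicit combinatorial formula is a higher derivation. -/
theorem explicit_formula_gives_higher_derivation
    {K A : Type*} [Field K] [CharZero K] [Ring A] [Algebra K A]
    (δ : ℕ → Module.End K A)
    (hδ : ∀ n, 1 ≤ n → ∀ a b : A, δ n (a * b) = δ n a * b + a * δ n b)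
    (d : ℕ → Module.End K A)
    (hd0 : d 0 = 1) (hd : ∀ n, 1 ≤ n → d n = explicitHigherTerm δ n) :
    ∀ (n : ℕ) (a b : A),
      d n (a * b) = ∑ k ∈ Finset.range (n + 1), d (n - k) a * d k b := by
  have hd_eq (n : ℕ) : d n = explicitHigherSeq δ n := by
    rcases Nat.eq_zero_or_pos n with rfl | hn
    · rw [hd0, explicitHigherSeq_zero]
    · rw [hd n hn, explicitHigherSeq_of_ne_zero δ hn.ne']
  have hrec (n : ℕ) : (n : K) • d n = ∑ m ∈ Icc 1 n, δ m * d (n - m) := by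
    simpa only [hd_eq] using natCast_smul_explicitHigherSeq δ n
  intro n a b
  rw [map_mul_eq_sum_antidiagonal_of_natCast_smul_eq_sum δ d hδ hd0 hrec,
    ← Nat.sum_antidiagonal_swap]
  exact Nat.sum_antidiagonal_eq_sum_range_succ (fun i j => d j a * d i b) n
end

section
/- The sum of the coefficients a_{r_1,...,r_i} = \prod_{j=1}^{i} 1/(r_j + \cdots + r_i) over all compositions (r_1, ..., r_i) of n into positive integers (all i from 1 to n) equals 1 for every n \geq 1. (For n = 4: 1/4 + 1/12 + 1/4 + 1/8 + 1/24 + 1/12 + 1/8 + 1/24 = 1, corresponding to the compositions 4, 1+3, 3+1, 2+2, 1+1+2, 1+2+1, 2+1+1, 1+1+1+1.) -/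
/-!
Writing `n = r₁ + ⋯ + rᵢ`, the first factor of `a_{r₁,…,rᵢ}` is `1/n` and the remaining
factors form `a_{r₂,…,rᵢ}`, the coefficient of a composition of `n - r₁`. Splitting off the
first part therefore gives `S n = (1/n) ∑_{b<n} S b`, where `S b` sums the coefficients over
all compositions of `b` with any number of parts (the empty composition of `0` contributing
`1`). Strong induction then gives `S n = 1` for all `n`.
-/

open Finset

def compositionTuples (i n : ℕ) : Finset (Fin i → ℕ) :=
  (Nat.antidiagonalTuple i n).filter fun r => ∀ j, 0 < r j

def compositionCoeff {i : ℕ} (r : Fin i → ℕ) : ℚ :=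
  ∏ j, (((∑ j' ∈ Ici j, r j') : ℕ) : ℚ)⁻¹

def compositionCoeffSum (i n : ℕ) : ℚ :=
  ∑ r ∈ compositionTuples i n, compositionCoeff r

theorem mem_compositionTuples {i n : ℕ} {r : Fin i → ℕ} :
    r ∈ compositionTuples i n ↔ ∑ j, r j = n ∧ ∀ j, 0 < r j := by
  simp [compositionTuples, Nat.mem_antidiagonalTuple]

theorem cons_mem_compositionTuples {i n a : ℕ} {t : Fin i → ℕ} :
    Fin.cons a t ∈ compositionTuples (i + 1) n ↔
      a + ∑ j, t j = n ∧ 0 < a ∧ ∀ j, 0 < t j := by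
  simp [mem_compositionTuples, Fin.sum_cons, Fin.forall_fin_succ]

theorem sum_compositionTuples_succ {M : Type*} [AddCommMonoid M] (i n : ℕ)
    (f : (Fin (i + 1) → ℕ) → M) :
    ∑ r ∈ compositionTuples (i + 1) n, f r =
      ∑ b ∈ range n, ∑ t ∈ compositionTuples i b, f (Fin.cons (n - b) t) := by
  rw [sum_sigma']
  refine (sum_nbij' (fun x : (_ : ℕ) × (Fin i → ℕ) => Fin.cons (n - x.1) x.2)
    (fun r : Fin (i + 1) → ℕ => ⟨n - r 0, Fin.tail r⟩) ?_ ?_ ?_ ?_ fun _ _ => rfl).symm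
  · rintro ⟨b, t⟩ h
    rw [mem_sigma, mem_range, mem_compositionTuples] at h
    rw [cons_mem_compositionTuples]
    dsimp only at h ⊢
    exact ⟨by omega, by omega, h.2.2⟩
  · intro r h
    rw [← Fin.cons_self_tail r, cons_mem_compositionTuples] at h
    rw [mem_sigma, mem_range, mem_compositionTuples]
    dsimp only
    exact ⟨by omega, by omega, h.2.2⟩
  · rintro ⟨b, t⟩ h
    rw [mem_sigma, mem_range] at h
    dsimp only at h ⊢
    rw [Fin.cons_zero, Fin.tail_cons, Nat.sub_sub_self h.1.le]
  · intro r h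
    rw [← Fin.cons_self_tail r, cons_mem_compositionTuples] at h
    conv_rhs => rw [← Fin.cons_self_tail r]
    rw [Nat.sub_sub_self (by omega)]

theorem compositionCoeff_cons {i : ℕ} (a : ℕ) (t : Fin i → ℕ) :
    compositionCoeff (Fin.cons a t : Fin (i + 1) → ℕ) =
      ((a + ∑ j, t j : ℕ) : ℚ)⁻¹ * compositionCoeff t := by
  have head : ∑ j' ∈ Ici 0, (Fin.cons a t : Fin (i + 1) → ℕ) j' = a + ∑ j, t j := by
    rw [← bot_eq_zero, Ici_bot, Fin.sum_cons]
  have tail (j : Fin i) :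
      ∑ j' ∈ Ici j.succ, (Fin.cons a t : Fin (i + 1) → ℕ) j' = ∑ j' ∈ Ici j, t j' := by
    rw [← Fin.map_succEmb_Ici, sum_map]
    simp
  simp only [compositionCoeff, Fin.prod_univ_succ, head, tail]

theorem compositionCoeffSum_zero (n : ℕ) :
    compositionCoeffSum 0 n = if n = 0 then 1 else 0 := by
  rcases n with _ | n <;> simp [compositionCoeffSum, compositionTuples, compositionCoeff,
    Nat.antidiagonalTuple_zero_zero, Nat.antidiagonalTuple_zero_succ]

theorem compositionCoeffSum_succ (i n : ℕ) :
    compositionCoeffSum (i + 1) n = (n : ℚ)⁻¹ * ∑ b ∈ range n, compositionCoeffSum i b := by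
  simp only [compositionCoeffSum, sum_compositionTuples_succ, mul_sum]
  refine sum_congr rfl fun b hb => sum_congr rfl fun t ht => ?_
  rw [compositionCoeff_cons, (mem_compositionTuples.1 ht).1,
    Nat.sub_add_cancel (mem_range.1 hb).le]

-- Any `N > n` exceeds the number of parts of every composition of `n`.
theorem sum_range_compositionCoeffSum {n N : ℕ} (h : n < N) :
    ∑ i ∈ range N, compositionCoeffSum i n = 1 := by
  induction n using Nat.strong_induction_on generalizing N with
  | _ n ih =>
  obtain ⟨M, rfl⟩ : ∃ M, N = M + 1 := ⟨N - 1, by omega⟩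
  calc ∑ i ∈ range (M + 1), compositionCoeffSum i n
      = (n : ℚ)⁻¹ * ∑ b ∈ range n, ∑ i ∈ range M, compositionCoeffSum i b
          + compositionCoeffSum 0 n := by
        simp only [sum_range_succ', compositionCoeffSum_succ, ← mul_sum]
        rw [sum_comm]
    _ = (n : ℚ)⁻¹ * n + compositionCoeffSum 0 n := by
        have hb : ∀ b ∈ range n, ∑ i ∈ range M, compositionCoeffSum i b = 1 := fun b hb =>
          ih b (mem_range.1 hb) ((mem_range.1 hb).trans_le (Nat.le_of_lt_succ h))
        rw [sum_congr rfl hb, sum_const, card_range, nsmul_one]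
    _ = 1 := by
        rw [compositionCoeffSum_zero]
        split_ifs with hn0 <;> simp [hn0]

/-- The coefficients `a_{r₁,…,rᵢ} = ∏ⱼ 1/(rⱼ + ⋯ + rᵢ)` summed over all compositions of
`n` into positive integers equal `1`, for every `n ≥ 1`. -/
theorem sum_composition_coefficients_eq_one (n : ℕ) (hn : 1 ≤ n) :
    ∑ i ∈ Finset.Icc 1 n,
      ∑ r ∈ (Finset.Nat.antidiagonalTuple i n).filter (fun r => ∀ j, 0 < r j),
        ∏ j, (((∑ j' ∈ Finset.Ici j, r j') : ℕ) : ℚ)⁻¹ = 1 := by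
  have h := sum_range_compositionCoeffSum n.lt_add_one
  rw [sum_range_eq_add_Ico _ n.add_one_pos, compositionCoeffSum_zero, if_neg (by omega),
    zero_add, Ico_add_one_right_eq_Icc] at h
  exact h
end
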